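/- Let δ > 0. There exists σ₀ > 0, depending only on δ, such that the following holds. Let X be a δ-hyperbolic metric space in which, for all x,x' ∈ X and every l > 0, there is a (1,l)-quasi-geodesic joining x to x'; let G act on X by isometries, let σ ≥ σ₀, let R be a σ-rotation family, and let (W,N,V) be an extended windmill with W nonempty and L = ⟨N ∪ K_V⟩. Set A = { v ∈ v(R)∖V : d(v,W) ≤ 3σ/10 }, assume A is nonempty, let S = Hull(W ∪ A), and let W' be the (σ/10)-neighborhood of K_A·S. Then the set K_A·S is 224δ-quasi-convex and W' is 2δ-quasi-convex. -/

import Mathlib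

open Metric

universe u v

/-- The Gromov product `(y,z)_x = (d(y,x)+d(z,x)-d(y,z))/2`. -/
noncomputable def gp {X : Type u} [MetricSpace X] (x y z : X) : ℝ :=
  (dist y x + dist z x - dist y z) / 2

/-- `X` is `δ`-hyperbolic: the four point inequality. -/
def IsHyp (X : Type u) [MetricSpace X] (δ : ℝ) : Prop :=
  ∀ x y z t : X, min (gp t x y) (gp t y z) - δ ≤ gp t x z

/-- `γ` restricted to `[a,b]` is a `(1,l)`-quasi-geodesic. -/
def IsQG {X : Type u} [MetricSpace X] (l a b : ℝ) (γ : ℝ → X) : Prop :=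
  ∀ t ∈ Set.Icc a b, ∀ t' ∈ Set.Icc a b,
    dist (γ t) (γ t') ≤ |t - t'| ∧ |t - t'| ≤ dist (γ t) (γ t') + l

/-- Any two points of `X` are joined by a `(1,l)`-quasi-geodesic, for every `l > 0`. -/
def QGSpace (X : Type u) [MetricSpace X] : Prop :=
  ∀ x x' : X, ∀ l : ℝ, 0 < l →
    ∃ a b : ℝ, ∃ γ : ℝ → X, a ≤ b ∧ IsQG l a b γ ∧ γ a = x ∧ γ b = x'

/-- `Y` is `α`-quasi-convex. -/
def QConvex {X : Type u} [MetricSpace X] (α : ℝ) (Y : Set X) : Prop :=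
  ∀ x : X, ∀ y ∈ Y, ∀ y' ∈ Y, infDist x Y ≤ gp x y y' + α

/-- The hull of `Y`: the union of the images of all `(1,δ)`-quasi-geodesics defined on
compact intervals whose two endpoints lie in `Y`. -/
def hull {X : Type u} [MetricSpace X] (δ : ℝ) (Y : Set X) : Set X :=
  { z | ∃ a b : ℝ, ∃ γ : ℝ → X, a ≤ b ∧ IsQG δ a b γ ∧ γ a ∈ Y ∧ γ b ∈ Y ∧
      z ∈ γ '' Set.Icc a b }

/-- The `r`-neighborhood of a subset. -/
def nbhd {X : Type u} [MetricSpace X] (r : ℝ) (Z : Set X) : Set X :=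
  { x | infDist x Z ≤ r }

/-- A `σ`-rotation family: a nonempty set of pairs (rotation subgroup, apex). -/
def IsRotFam {X : Type u} [MetricSpace X] {G : Type v} [Group G] [MulAction G X]
    (σ : ℝ) (R : Set (Subgroup G × X)) : Prop :=
  R.Nonempty ∧
  (∀ p ∈ R, ∀ x : X, dist x p.2 ≤ σ / 10 → ∀ h ∈ p.1, h ≠ 1 →
      dist (h • x) x = 2 * dist p.2 x) ∧
  (∀ p ∈ R, ∀ q ∈ R, p ≠ q → σ ≤ dist p.2 q.2) ∧
  (∀ g : G, ∀ p ∈ R, (Subgroup.map (MulAut.conj g).toMonoidHom p.1, g • p.2) ∈ R)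

/-- The set of apices of a rotation family. -/
def apices {G : Type v} {X : Type u} [Group G] (R : Set (Subgroup G × X)) : Set X :=
  Prod.snd '' R

/-- The subgroup `K_Y` generated by all rotation subgroups whose apex lies in `Y`. -/
def rotSub {G : Type v} {X : Type u} [Group G] (R : Set (Subgroup G × X)) (Y : Set X) :
    Subgroup G :=
  ⨆ p ∈ { q ∈ R | q.2 ∈ Y }, p.1

/-- The orbit set `P • Z`. -/
def orbSet {G : Type v} {X : Type u} [Group G] [MulAction G X] (P : Subgroup G)
    (Z : Set X) : Set X :=
  { x | ∃ g ∈ P, ∃ z ∈ Z, x = g • z }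

/-- An extended windmill `(W, N, V)` for the rotation family `R`. -/
def IsExtWindmill {X : Type u} [MetricSpace X] {G : Type v} [Group G] [MulAction G X]
    (δ : ℝ) (R : Set (Subgroup G × X)) (W : Set X) (N : Subgroup G) (V : Set X) : Prop :=
  V ⊆ apices R ∧
  QConvex (2 * δ) W ∧
  (∀ g ∈ N ⊔ rotSub R V, ∀ w ∈ W, g • w ∈ W) ∧
  (∀ g ∈ N ⊔ rotSub R V, ∀ v ∈ V, g • v ∈ V) ∧
  (∀ p ∈ R, p.2 ∉ V → ∀ h ∈ p.1, h ≠ 1 → ∀ x ∈ W, ∀ x' ∈ W,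
      gp p.2 x (h • x') ≤ 100 * δ) ∧
  (∀ p ∈ R, p.2 ∉ V → ∀ g ∈ N ⊔ rotSub R V, g • p.2 = p.2 → g = 1)

/-!
The hull `S` of `W ∪ A` is `7δ`-quasi-convex. By (W3) and the separation of the apices, an apex
`v ∈ A` sees `S` and its image under any nontrivial rotation `h` at `v` at a small angle:
`(z, h z')_v ≤ 107δ` for `z, z' ∈ S`. Writing `g ∈ K_A` as a reduced word `h₁ ⋯ hₙ` in rotation
groups at apices `a₁, …, aₙ ∈ A`, the points `z, a₁, h₁a₂, …, h₁⋯hₙz'` thus form a chain with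
small angles and inner segments of length at least `σ`. Such a chain does not backtrack in a
hyperbolic space, so one of its segments, a translate of a segment between two points of `S`, is
seen from any `x` at angle at most `(z, g z')_x + 112δ`; this gives the quasi-convexity of
`K_A · S`. Finally, when points are joined by `(1, l)`-quasi-geodesics, the `r`-neighbourhood of
an `r`-quasi-convex set is `2δ`-quasi-convex.
-/

section GromovProduct

variable {X : Type u} [MetricSpace X]

lemma gp_comm (x y z : X) : gp x y z = gp x z y := by
  unfold gp; rw [dist_comm y z]; ring

lemma gp_nonneg (x y z : X) : 0 ≤ gp x y z := by
  unfold gp; linarith [dist_triangle y x z, dist_comm x z]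

lemma gp_le_dist (x y z : X) : gp x y z ≤ dist x z := by
  unfold gp; linarith [dist_triangle y z x, dist_comm x z]

lemma sub_le_gp (x y z : X) : dist x y - dist y z ≤ gp x y z := by
  unfold gp; linarith [dist_triangle x z y, dist_comm x y, dist_comm x z, dist_comm z y]

lemma gp_left_self (x z : X) : gp x x z = 0 := by
  unfold gp; rw [dist_comm x z]; simp

lemma gp_right_self (x y : X) : gp x y x = 0 := by
  rw [gp_comm, gp_left_self]

lemma gp_add_gp_eq_dist (x y z : X) : gp x z y + gp y z x = dist x y := by
  unfold gp; rw [dist_comm z x, dist_comm y x, dist_comm z y]; ring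

lemma gp_add_gp (x a b c : X) : gp x a c + gp x c b = gp x a b + dist x c - gp c a b := by
  unfold gp; rw [dist_comm x c, dist_comm c b]; ring

lemma gp_le_gp_add {x y₁ y₂ z : X} {e : ℝ} (hz : gp z y₁ y₂ ≤ e) :
    gp x y₁ y₂ ≤ gp x y₁ z + e := by
  unfold gp at *; linarith [dist_triangle y₂ z x]

lemma gp_smul {G : Type v} [SMul G X] [IsIsometricSMul G X] (g : G) (x y z : X) :
    gp (g • x) (g • y) (g • z) = gp x y z := by
  simp only [gp, dist_smul]

end GromovProduct

namespace IsHyp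

variable {X : Type u} [MetricSpace X] {δ : ℝ}

lemma nonneg (hX : IsHyp X δ) (x : X) : 0 ≤ δ := by
  have := hX x x x x
  rw [min_self] at this; linarith

lemma le_gp_of_le (hX : IsHyp X δ) {t a b c : X} {C : ℝ} (hab : C ≤ gp t a b)
    (hbc : C ≤ gp t b c) : C - δ ≤ gp t a c :=
  (sub_le_sub_right (le_min hab hbc) δ).trans (hX a b c t)

lemma gp_le_of_lt_gp (hX : IsHyp X δ) {t a b c : X} {C : ℝ} (hac : gp t a c ≤ C)
    (hab : C + δ < gp t a b) : gp t b c ≤ C + δ := by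
  by_contra! hbc
  linarith [hX a b c t, lt_min hab hbc]

lemma gp_le_of_far (hX : IsHyp X δ) {v w b c : X} {C : ℝ} (hc : gp v w c ≤ C)
    (hfar : dist b w + C + δ < dist v b) : gp v b c ≤ C + δ :=
  hX.gp_le_of_lt_gp hc (by linarith [sub_le_gp v b w, gp_comm v b w])

lemma gp_le_max_add (hX : IsHyp X δ) {z y₁ y₂ : X} {e : ℝ} (he : 0 ≤ e)
    (hz : gp z y₁ y₂ ≤ e) (v q : X) :
    gp v z q ≤ max (gp v y₁ q) (gp v y₂ q) + e + 2 * δ := by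
  have hsum := gp_add_gp v y₁ y₂ z
  have hmin := hX y₁ z y₂ v
  have hq : gp v z q ≤ dist v z := gp_comm v z q ▸ gp_le_dist v q z
  have hδ := hX.nonneg v
  rcases le_total (gp v y₁ z) (gp v z y₂) with h | h
  · rw [min_eq_left h] at hmin
    have := hX.le_gp_of_le (t := v) (C := gp v z q - e - δ) (a := y₂) (b := z) (c := q)
      (by linarith [gp_comm v y₂ z]) (by linarith)
    linarith [le_max_right (gp v y₁ q) (gp v y₂ q)]
  · rw [min_eq_right h] at hmin
    have := hX.le_gp_of_le (t := v) (C := gp v z q - e - δ) (a := y₁) (b := z) (c := q)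
      (by linarith) (by linarith)
    linarith [le_max_left (gp v y₁ q) (gp v y₂ q)]

/-- A point `p` near `[v, w]`, placed where the projection of `x` should be, is at distance
about `(v, w)_x` from `x`. -/
lemma dist_le_gp_add (hX : IsHyp X δ) {x p v w : X} {e l : ℝ} (hp : gp p v w ≤ e)
    (hv : gp v x w - l ≤ dist v p) (hw : gp w x v - l ≤ dist w p) :
    dist x p ≤ gp x v w + l + 2 * e + 2 * δ := by
  rcases min_le_iff.mp (show min (gp p v x) (gp p x w) ≤ e + δ by linarith [hX v x w p])
    with h | h <;>
  · unfold gp at *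
    linarith [dist_comm x v, dist_comm x w, dist_comm v w, dist_comm p x]

end IsHyp

namespace IsQG

variable {X : Type u} [MetricSpace X] {l a b : ℝ} {γ : ℝ → X}

lemma dist_le (hγ : IsQG l a b γ) {s t : ℝ} (hs : s ∈ Set.Icc a b) (ht : t ∈ Set.Icc a b)
    (hst : s ≤ t) : dist (γ s) (γ t) ≤ t - s := by
  simpa [abs_of_nonpos (sub_nonpos.mpr hst)] using (hγ s hs t ht).1

lemma sub_le_dist_add (hγ : IsQG l a b γ) {s t : ℝ} (hs : s ∈ Set.Icc a b)
    (ht : t ∈ Set.Icc a b) (hst : s ≤ t) : t - s ≤ dist (γ s) (γ t) + l := by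
  simpa [abs_of_nonpos (sub_nonpos.mpr hst)] using (hγ s hs t ht).2

lemma gp_le (hγ : IsQG l a b γ) {t : ℝ} (ht : t ∈ Set.Icc a b) :
    gp (γ t) (γ a) (γ b) ≤ l / 2 := by
  have ha : a ∈ Set.Icc a b := ⟨le_rfl, ht.1.trans ht.2⟩
  have hb : b ∈ Set.Icc a b := ⟨ht.1.trans ht.2, le_rfl⟩
  have h1 := hγ.dist_le ha ht ht.1
  have h2 := hγ.dist_le ht hb ht.2
  have h3 := hγ.sub_le_dist_add ha hb (ht.1.trans ht.2)
  unfold gp; rw [dist_comm (γ b)]; linarith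

lemma exists_dist_le_gp (hγ : IsQG l a b γ) (hab : a ≤ b) {δ : ℝ} (hX : IsHyp X δ) (x : X) :
    ∃ t ∈ Set.Icc a b, dist x (γ t) ≤ gp x (γ a) (γ b) + 2 * l + 2 * δ := by
  have ha : a ∈ Set.Icc a b := ⟨le_rfl, hab⟩
  have hb : b ∈ Set.Icc a b := ⟨hab, le_rfl⟩
  have hlen := hγ.dist_le ha hb hab
  have hsum := gp_add_gp_eq_dist (γ a) (γ b) x
  have ht : a + gp (γ a) x (γ b) ∈ Set.Icc a b :=
    ⟨by linarith [gp_nonneg (γ a) x (γ b)], by linarith [gp_le_dist (γ a) x (γ b)]⟩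
  refine ⟨_, ht, ?_⟩
  have h1 := hγ.sub_le_dist_add ha ht ht.1
  have h2 := hγ.sub_le_dist_add ht hb ht.2
  rw [dist_comm] at h2
  have := hX.dist_le_gp_add (x := x) (l := l) (hγ.gp_le ht) (by linarith) (by linarith)
  linarith

end IsQG

section Hull

variable {X : Type u} [MetricSpace X] {δ : ℝ} {Y : Set X}

lemma subset_hull (hδ : 0 ≤ δ) : Y ⊆ hull δ Y := by
  intro y hy
  refine ⟨0, 0, fun _ => y, le_rfl, ?_, hy, hy, 0, ⟨le_rfl, le_rfl⟩, rfl⟩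
  intro t ht t' ht'
  obtain rfl : t = 0 := le_antisymm ht.2 ht.1
  obtain rfl : t' = 0 := le_antisymm ht'.2 ht'.1
  simp [hδ]

lemma exists_gp_le_of_mem_hull {z : X} (hz : z ∈ hull δ Y) :
    ∃ y₁ ∈ Y, ∃ y₂ ∈ Y, gp z y₁ y₂ ≤ δ / 2 := by
  obtain ⟨a, b, γ, -, hγ, ha, hb, t, ht, rfl⟩ := hz
  exact ⟨γ a, ha, γ b, hb, hγ.gp_le ht⟩

lemma IsHyp.infDist_hull_le (hX : IsHyp X δ) (hδ : 0 < δ) (hQG : QGSpace X) {y₁ y₂ : X}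
    (hy₁ : y₁ ∈ Y) (hy₂ : y₂ ∈ Y) (x : X) : infDist x (hull δ Y) ≤ gp x y₁ y₂ + 4 * δ := by
  obtain ⟨a, b, γ, hab, hγ, rfl, rfl⟩ := hQG y₁ y₂ δ hδ
  obtain ⟨t, ht, hxt⟩ := hγ.exists_dist_le_gp hab hX x
  have hmem : γ t ∈ hull δ Y := ⟨a, b, γ, hab, hγ, hy₁, hy₂, t, ht, rfl⟩
  linarith [infDist_le_dist_of_mem (x := x) hmem]

lemma IsHyp.qconvex_hull (hX : IsHyp X δ) (hδ : 0 < δ) (hQG : QGSpace X) (Y : Set X) :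
    QConvex (7 * δ) (hull δ Y) := by
  intro x z hz z' hz'
  obtain ⟨y₁, hy₁, y₂, hy₂, h₁₂⟩ := exists_gp_le_of_mem_hull hz
  obtain ⟨y₃, hy₃, y₄, hy₄, h₃₄⟩ := exists_gp_le_of_mem_hull hz'
  set D := infDist x (hull δ Y) - 4 * δ
  have hz₁ : D - δ / 2 ≤ gp x z y₁ := by
    rw [gp_comm]; linarith [gp_le_gp_add (x := x) h₁₂, hX.infDist_hull_le hδ hQG hy₁ hy₂ x]
  have hz'₃ : D - δ / 2 ≤ gp x y₃ z' := by
    linarith [gp_le_gp_add (x := x) h₃₄, hX.infDist_hull_le hδ hQG hy₃ hy₄ x]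
  have hz₃ : D - δ / 2 - δ ≤ gp x z y₃ :=
    hX.le_gp_of_le hz₁ (by linarith [hX.infDist_hull_le hδ hQG hy₁ hy₃ x])
  linarith [hX.le_gp_of_le hz₃ (by linarith : D - δ / 2 - δ ≤ gp x y₃ z')]

end Hull

section Neighborhood

variable {X : Type u} [MetricSpace X]

lemma QGSpace.exists_dist_le (hQG : QGSpace X) {x y : X} {r η : ℝ} (hr : 0 ≤ r)
    (hxy : r ≤ dist x y) (hη : 0 < η) : ∃ p, dist p y ≤ r ∧ dist x p ≤ dist x y - r + η := by
  obtain ⟨a, b, γ, hab, hγ, rfl, rfl⟩ := hQG x y η hη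
  have ha : a ∈ Set.Icc a b := ⟨le_rfl, hab⟩
  have hb : b ∈ Set.Icc a b := ⟨hab, le_rfl⟩
  have hs : max a (b - r) ∈ Set.Icc a b := ⟨le_max_left _ _, max_le hab (by linarith)⟩
  refine ⟨γ (max a (b - r)), ?_, ?_⟩
  · linarith [hγ.dist_le hs hb hs.2, le_max_right a (b - r)]
  · have := hγ.dist_le ha hs hs.1
    rcases max_cases a (b - r) with ⟨h, -⟩ | ⟨h, -⟩ <;> rw [h] at this ⊢
    · linarith
    · linarith [hγ.sub_le_dist_add ha hb hab]

lemma IsHyp.qconvex_nbhd {δ α r : ℝ} {T : Set X} (hX : IsHyp X δ) (hQG : QGSpace X)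
    (hT : QConvex α T) (hαr : α ≤ r) : QConvex (2 * δ) (nbhd r T) := by
  intro x y hy y' hy'
  have hδ := hX.nonneg x
  by_cases hx : infDist x T ≤ r
  · rw [infDist_zero_of_mem (show x ∈ nbhd r T from hx)]
    linarith [gp_nonneg x y y']
  push Not at hx
  have hr : 0 ≤ r := infDist_nonneg.trans (show infDist y T ≤ r from hy)
  have hTne : T.Nonempty := Set.nonempty_iff_ne_empty.mpr fun h => by
    rw [h, infDist_empty] at hx; linarith
  refine le_of_forall_pos_le_add fun ε hε => ?_
  have hη : 0 < ε / 3 := by positivity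
  obtain ⟨t, ht, hyt⟩ := (infDist_lt_iff hTne).mp
    ((show infDist y T ≤ r from hy).trans_lt (lt_add_of_pos_right r hη))
  obtain ⟨t', ht', hyt'⟩ := (infDist_lt_iff hTne).mp
    ((show infDist y' T ≤ r from hy').trans_lt (lt_add_of_pos_right r hη))
  obtain ⟨t₀, ht₀, hxt₀⟩ := (infDist_lt_iff hTne).mp (lt_add_of_pos_right (infDist x T) hη)
  have hdt := infDist_le_dist_of_mem (x := x) ht
  have hdt' := infDist_le_dist_of_mem (x := x) ht'
  have hyt₁ : infDist x T - r - ε / 3 ≤ gp x y t := by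
    rw [gp_comm]; linarith [sub_le_gp x t y, dist_comm y t]
  have hty' : infDist x T - r - ε / 3 - δ ≤ gp x t y' :=
    hX.le_gp_of_le (b := t') (by linarith [hT x t ht t' ht'])
      (by linarith [sub_le_gp x t' y', dist_comm y' t'])
  have hyy' : infDist x T - r - ε / 3 - δ - δ ≤ gp x y y' :=
    hX.le_gp_of_le (by linarith) hty'
  obtain ⟨p, hpt₀, hxp⟩ := hQG.exists_dist_le hr
    (hx.le.trans (infDist_le_dist_of_mem ht₀)) hη
  have hp : p ∈ nbhd r T := (infDist_le_dist_of_mem ht₀).trans hpt₀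
  linarith [infDist_le_dist_of_mem (x := x) hp]

end Neighborhood

section OrbitSet

variable {X : Type u} {G : Type v} [Group G] [MulAction G X] {P : Subgroup G} {Z : Set X}

lemma subset_orbSet : Z ⊆ orbSet P Z :=
  fun z hz => ⟨1, P.one_mem, z, hz, (one_smul G z).symm⟩

lemma smul_mem_orbSet {c : G} (hc : c ∈ P) {x : X} (hx : x ∈ orbSet P Z) :
    c • x ∈ orbSet P Z := by
  obtain ⟨g, hg, z, hz, rfl⟩ := hx
  exact ⟨c * g, P.mul_mem hc hg, z, hz, (mul_smul c g z).symm⟩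

variable [MetricSpace X] [IsIsometricSMul G X]

lemma infDist_smul_orbSet {c : G} (hc : c ∈ P) (x : X) :
    infDist (c • x) (orbSet P Z) = infDist x (orbSet P Z) := by
  have himage : (fun y => c • y) '' orbSet P Z = orbSet P Z :=
    Set.Subset.antisymm (Set.image_subset_iff.mpr fun _ hy => smul_mem_orbSet hc hy)
      fun y hy => ⟨c⁻¹ • y, smul_mem_orbSet (P.inv_mem hc) hy, smul_inv_smul c y⟩
  conv_lhs => rw [← himage]
  exact infDist_image (isometry_smul X c)

lemma QConvex.infDist_orbSet_le {α : ℝ} (hZ : QConvex α Z) {c : G} (hc : c ∈ P) {a b : X}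
    (ha : a ∈ Z) (hb : b ∈ Z) (x : X) :
    infDist x (orbSet P Z) ≤ gp x (c • a) (c • b) + α :=
  calc infDist x (orbSet P Z) = infDist (c⁻¹ • x) (orbSet P Z) :=
        (infDist_smul_orbSet (P.inv_mem hc) x).symm
    _ ≤ infDist (c⁻¹ • x) Z := infDist_le_infDist_of_subset subset_orbSet ⟨a, ha⟩
    _ ≤ gp (c⁻¹ • x) a b + α := hZ _ a ha b hb
    _ = gp x (c • a) (c • b) + α := by rw [← gp_smul c, smul_inv_smul]

lemma qconvex_orbSet {α : ℝ}
    (h : ∀ g ∈ P, ∀ z ∈ Z, ∀ z' ∈ Z, ∀ x, infDist x (orbSet P Z) ≤ gp x z (g • z') + α) :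
    QConvex α (orbSet P Z) := by
  rintro x _ ⟨g, hg, z, hz, rfl⟩ _ ⟨g', hg', z', hz', rfl⟩
  have := h (g⁻¹ * g') (P.mul_mem (P.inv_mem hg) hg') z hz z' hz' (g⁻¹ • x)
  rwa [infDist_smul_orbSet (P.inv_mem hg), ← gp_smul g, smul_inv_smul, ← mul_smul,
    mul_inv_cancel_left] at this

end OrbitSet

section ReducedWord

variable {G : Type v} [Group G] {ι : Type*}

def IsReducedWord (H : ι → Subgroup G) (s : Set ι) (w : List (ι × G)) : Prop :=
  (∀ e ∈ w, e.1 ∈ s ∧ e.2 ∈ H e.1 ∧ e.2 ≠ 1) ∧ w.IsChain fun e f => e.1 ≠ f.1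

variable {H : ι → Subgroup G} {s : Set ι}

lemma IsReducedWord.exists_mul {w : List (ι × G)} (hw : IsReducedWord H s w) {i : ι}
    (hi : i ∈ s) {h : G} (hh : h ∈ H i) :
    ∃ w', IsReducedWord H s w' ∧ (w'.map Prod.snd).prod = h * (w.map Prod.snd).prod := by
  by_cases h1 : h = 1
  · exact ⟨w, hw, by rw [h1, one_mul]⟩
  obtain ⟨hmem, hchain⟩ := hw
  match w, hmem, hchain with
  | [], _, _ => exact ⟨[(i, h)], ⟨by simp [hi, hh, h1], List.isChain_singleton _⟩, by simp⟩
  | (j, k) :: t, hmem, hchain =>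
    have hk := hmem _ List.mem_cons_self
    have htail : IsReducedWord H s t :=
      ⟨fun e he => hmem e (List.mem_cons_of_mem _ he), hchain.tail⟩
    by_cases hij : i = j
    · subst hij
      by_cases hhk : h * k = 1
      · exact ⟨t, htail, by simp [← mul_assoc, hhk]⟩
      refine ⟨(i, h * k) :: t, ⟨?_, ?_⟩, by simp [mul_assoc]⟩
      · intro e he
        rcases List.mem_cons.mp he with rfl | he
        · exact ⟨hi, (H _).mul_mem hh hk.2.1, hhk⟩
        · exact htail.1 e he
      · rw [← List.isChain_map Prod.fst] at hchain ⊢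
        simpa using hchain
    · refine ⟨(i, h) :: (j, k) :: t, ⟨?_, hchain.cons_cons hij⟩, by simp⟩
      intro e he
      rcases List.mem_cons.mp he with rfl | he
      · exact ⟨hi, hh, h1⟩
      · exact hmem e he

lemma exists_isReducedWord_of_mem_biSup {g : G} (hg : g ∈ ⨆ i ∈ s, H i) :
    ∃ w, IsReducedWord H s w ∧ (w.map Prod.snd).prod = g := by
  rw [iSup_subtype', Subgroup.iSup_eq_closure] at hg
  induction hg using Subgroup.closure_induction_left with
  | one => exact ⟨[], ⟨by simp, List.isChain_nil⟩, rfl⟩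
  | mul_left x hx y _ ih =>
    obtain ⟨i, hx⟩ := Set.mem_iUnion.mp hx
    obtain ⟨w, hw, rfl⟩ := ih
    exact hw.exists_mul i.2 hx
  | inv_mul_cancel x hx y _ ih =>
    obtain ⟨i, hx⟩ := Set.mem_iUnion.mp hx
    obtain ⟨w, hw, rfl⟩ := ih
    exact hw.exists_mul i.2 ((H i).inv_mem hx)

end ReducedWord

section BrokenChain

variable {X : Type u} [MetricSpace X]

/-- Only the inner segments are required to be long. -/
def IsBrokenChain (ε L : ℝ) (m : ℕ) (u : ℕ → X) : Prop :=
  (∀ j, j + 2 ≤ m → gp (u (j + 1)) (u j) (u (j + 2)) ≤ ε) ∧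
    ∀ j, j + 3 ≤ m → L ≤ dist (u (j + 1)) (u (j + 2))

namespace IsBrokenChain

variable {ε L δ : ℝ} {m : ℕ} {u : ℕ → X}

lemma reverse (h : IsBrokenChain ε L m u) : IsBrokenChain ε L m fun k => u (m - k) := by
  constructor
  · intro j hj
    obtain ⟨i, rfl⟩ : ∃ i, m = i + j + 2 := ⟨m - j - 2, by omega⟩
    beta_reduce
    rw [show i + j + 2 - (j + 1) = i + 1 by omega, show i + j + 2 - j = i + 2 by omega,
      show i + j + 2 - (j + 2) = i by omega, gp_comm]
    exact h.1 i (by omega)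
  · intro j hj
    obtain ⟨i, rfl⟩ : ∃ i, m = i + j + 3 := ⟨m - j - 3, by omega⟩
    beta_reduce
    rw [show i + j + 3 - (j + 1) = i + 2 by omega, show i + j + 3 - (j + 2) = i + 1 by omega,
      dist_comm]
    exact h.2 i (by omega)

lemma gp_start_le (h : IsBrokenChain ε L m u) (hX : IsHyp X δ) (hL : 2 * ε + 2 * δ < L) :
    ∀ j, j + 2 ≤ m → gp (u (j + 1)) (u 0) (u (j + 2)) ≤ ε + δ := by
  intro j
  induction j with
  | zero => intro hm; linarith [h.1 0 hm, hX.nonneg (u 0)]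
  | succ j ih =>
    intro hj
    have hfar : ε + δ < gp (u (j + 2)) (u (j + 1)) (u 0) := by
      linarith [ih (by omega), h.2 j (by omega), gp_add_gp_eq_dist (u (j + 1)) (u (j + 2)) (u 0),
        gp_comm (u (j + 2)) (u (j + 1)) (u 0)]
    exact hX.gp_le_of_lt_gp (h.1 (j + 1) hj) hfar

lemma gp_ends_le (h : IsBrokenChain ε L m u) (hX : IsHyp X δ) (hL : 2 * ε + 3 * δ < L)
    {j : ℕ} (hj : j + 2 ≤ m) : gp (u (j + 1)) (u 0) (u m) ≤ ε + 2 * δ := by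
  have hδ := hX.nonneg (u 0)
  have hstart := h.gp_start_le hX (by linarith) j hj
  rcases hj.eq_or_lt with hm | hm
  · rw [← hm]; linarith
  have hend : gp (u (j + 2)) (u m) (u (j + 1)) ≤ ε + δ := by
    have := h.reverse.gp_start_le hX (by linarith) (m - j - 3) (by omega)
    rwa [show m - (m - j - 3 + 1) = j + 2 by omega, show m - (m - j - 3 + 2) = j + 1 by omega,
      Nat.sub_zero] at this
  have hfar : ε + δ + δ < gp (u (j + 1)) (u (j + 2)) (u m) := by
    linarith [gp_add_gp_eq_dist (u (j + 1)) (u (j + 2)) (u m), h.2 j (by omega),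
      gp_comm (u (j + 1)) (u (j + 2)) (u m)]
  have := hX.gp_le_of_lt_gp (by rw [gp_comm]; exact hstart) hfar
  linarith [gp_comm (u (j + 1)) (u m) (u 0)]

lemma gp_succ_le (h : IsBrokenChain ε L m u) (hX : IsHyp X δ) (hL : 2 * ε + 3 * δ < L)
    (hε : 0 ≤ ε) {x : X} {j : ℕ} (hj : j + 2 ≤ m)
    (hclose : gp x (u j) (u m) ≤ gp x (u 0) (u m) + δ)
    (hfar : gp x (u 0) (u m) + δ < gp x (u (j + 1)) (u m)) :
    gp x (u j) (u (j + 1)) ≤ gp x (u 0) (u m) + ε + 5 * δ := by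
  have hδ := hX.nonneg x
  rcases lt_or_ge (gp x (u 0) (u m) + 2 * δ) (gp x (u (j + 1)) (u m)) with hfar' | hnear
  · have := hX.gp_le_of_lt_gp (t := x) (b := u (j + 1))
      ((gp_comm x (u m) (u j)).trans_le hclose) (by linarith [gp_comm x (u m) (u (j + 1))])
    linarith [gp_comm x (u j) (u (j + 1))]
  · have h0 := hX.gp_le_of_lt_gp (t := x) (b := u (j + 1)) (c := u 0)
      (gp_comm x (u m) (u 0)).le (by linarith [gp_comm x (u m) (u (j + 1))])
    linarith [h.gp_ends_le hX hL hj, gp_add_gp x (u 0) (u m) (u (j + 1)),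
      gp_le_dist x (u j) (u (j + 1)), gp_comm x (u (j + 1)) (u 0)]

lemma exists_gp_le (h : IsBrokenChain ε L m u) (hX : IsHyp X δ) (hL : 2 * ε + 3 * δ < L)
    (hε : 0 ≤ ε) (hm : 1 ≤ m) (x : X) :
    ∃ k, k + 1 ≤ m ∧ gp x (u k) (u (k + 1)) ≤ gp x (u 0) (u m) + ε + 5 * δ := by
  by_contra! hbad
  have hδ := hX.nonneg x
  have hclose : ∀ j, j + 1 ≤ m → gp x (u j) (u m) ≤ gp x (u 0) (u m) + δ := by
    intro j
    induction j with
    | zero => intro _; linarith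
    | succ j ih =>
      intro hj
      by_contra! hfar
      exact (hbad j (by omega)).not_ge (h.gp_succ_le hX hL hε (by omega) (ih (by omega)) hfar)
  have hlast := hbad (m - 1) (by omega)
  rw [Nat.sub_add_cancel hm] at hlast
  linarith [hclose (m - 1) (by omega)]

end IsBrokenChain

end BrokenChain

section WordChain

variable {X : Type u} {G : Type v}

def prefixProd [Monoid G] (w : List (X × G)) (k : ℕ) : G :=
  ((w.map Prod.snd).take k).prod

/-- `z` at `0`, the point of the `k`-th letter at `k ∈ [1, n]`, and `z'` from `n + 1` on. -/
def wordPoint (z z' : X) (w : List (X × G)) (k : ℕ) : X :=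
  (z :: w.map Prod.fst).getD k z'

variable {w : List (X × G)} {z z' : X}

lemma wordPoint_mem {S : Set X} (hS : ∀ e ∈ w, e.1 ∈ S) (hz : z ∈ S) (hz' : z' ∈ S) (k : ℕ) :
    wordPoint z z' w k ∈ S := by
  rcases k with _ | k
  · exact hz
  by_cases hk : k < w.length
  · simpa [wordPoint, hk] using hS _ (List.getElem_mem hk)
  · simpa [wordPoint, List.getD_eq_default, not_lt.mp hk] using hz'

lemma wordPoint_succ {j : ℕ} (hj : j < w.length) : wordPoint z z' w (j + 1) = w[j].1 := by
  simp [wordPoint, hj]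

variable [Monoid G]

lemma prefixProd_succ {j : ℕ} (hj : j < w.length) :
    prefixProd w (j + 1) = prefixProd w j * w[j].2 := by
  rw [prefixProd, List.prod_take_succ _ _ (by simpa using hj), List.getElem_map, prefixProd]

variable [MulAction G X]

lemma prefixProd_succ_smul (hfix : ∀ e ∈ w, e.2 • e.1 = e.1) (k : ℕ) :
    prefixProd w (k + 1) • wordPoint z z' w (k + 1) =
      prefixProd w k • wordPoint z z' w (k + 1) := by
  by_cases hk : k < w.length
  · rw [prefixProd_succ hk, mul_smul, wordPoint_succ hk, hfix _ (List.getElem_mem hk)]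
  · rw [prefixProd, prefixProd, List.take_of_length_le (by simp; omega),
      List.take_of_length_le (by simp; omega)]

variable [MetricSpace X] [IsIsometricSMul G X]

/-- The chain `z, a₁, h₁a₂, h₁h₂a₃, …, h₁⋯hₙz'` of the word `(a₁, h₁) ⋯ (aₙ, hₙ)`. -/
lemma isBrokenChain_word {ε L : ℝ} {S : Set X} (hfix : ∀ e ∈ w, e.2 • e.1 = e.1)
    (hS : ∀ e ∈ w, e.1 ∈ S) (hangle : ∀ e ∈ w, ∀ s ∈ S, ∀ s' ∈ S, gp e.1 s (e.2 • s') ≤ ε)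
    (hlen : w.IsChain fun e f => L ≤ dist e.1 f.1) (hz : z ∈ S) (hz' : z' ∈ S) :
    IsBrokenChain ε L (w.length + 1) fun k => prefixProd w k • wordPoint z z' w k := by
  constructor
  · intro j hj
    have hj' : j < w.length := by omega
    show gp (prefixProd w (j + 1) • wordPoint z z' w (j + 1)) (prefixProd w j • wordPoint z z' w j)
      (prefixProd w (j + 1 + 1) • wordPoint z z' w (j + 1 + 1)) ≤ ε
    rw [prefixProd_succ_smul hfix j, prefixProd_succ_smul hfix (j + 1), prefixProd_succ hj',
      mul_smul, gp_smul, wordPoint_succ hj']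
    exact hangle _ (List.getElem_mem hj') _ (wordPoint_mem hS hz hz' j) _
      (wordPoint_mem hS hz hz' _)
  · intro j hj
    show L ≤ dist (prefixProd w (j + 1) • wordPoint z z' w (j + 1))
      (prefixProd w (j + 1 + 1) • wordPoint z z' w (j + 1 + 1))
    rw [prefixProd_succ_smul hfix (j + 1), dist_smul, wordPoint_succ (by omega),
      wordPoint_succ (by omega)]
    exact List.isChain_iff_getElem.mp hlen j (by omega)

lemma IsHyp.exists_prefix_gp_le {δ ε L : ℝ} (hX : IsHyp X δ) (hL : 2 * ε + 3 * δ < L)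
    (hε : 0 ≤ ε) {S : Set X} (hfix : ∀ e ∈ w, e.2 • e.1 = e.1)
    (hS : ∀ e ∈ w, e.1 ∈ S) (hangle : ∀ e ∈ w, ∀ s ∈ S, ∀ s' ∈ S, gp e.1 s (e.2 • s') ≤ ε)
    (hlen : w.IsChain fun e f => L ≤ dist e.1 f.1) (hz : z ∈ S) (hz' : z' ∈ S) (x : X) :
    ∃ l, l <+: w.map Prod.snd ∧ ∃ s ∈ S, ∃ s' ∈ S,
      gp x (l.prod • s) (l.prod • s') ≤ gp x z ((w.map Prod.snd).prod • z') + ε + 5 * δ := by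
  obtain ⟨k, -, hgp⟩ :=
    (isBrokenChain_word hfix hS hangle hlen hz hz').exists_gp_le hX hL hε (by omega) x
  have hstart : prefixProd w 0 • wordPoint z z' w 0 = z := by simp [prefixProd, wordPoint]
  have hend : prefixProd w (w.length + 1) • wordPoint z z' w (w.length + 1) =
      (w.map Prod.snd).prod • z' := by
    simp [prefixProd, wordPoint, List.take_of_length_le]
  rw [prefixProd_succ_smul hfix, hstart, hend] at hgp
  exact ⟨_, List.take_prefix k _, _, wordPoint_mem hS hz hz' k, _, wordPoint_mem hS hz hz' (k + 1),
    hgp⟩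

end WordChain

section Windmill

variable {X : Type u} [MetricSpace X] {G : Type v} [Group G] [MulAction G X] {δ σ : ℝ}

lemma IsRotFam.smul_apex {R : Set (Subgroup G × X)} (hR : IsRotFam σ R) (hσ : 0 ≤ σ)
    {p : Subgroup G × X} (hp : p ∈ R) {h : G} (hh : h ∈ p.1) : h • p.2 = p.2 := by
  by_cases h1 : h = 1
  · rw [h1, one_smul]
  have := hR.2.1 p hp p.2 (by rw [dist_self]; positivity) h hh h1
  rwa [dist_self, mul_zero, dist_eq_zero] at this

variable [IsIsometricSMul G X]

lemma IsHyp.gp_smul_le_of_far (hX : IsHyp X δ) {W A : Set X} {v : X} {h : G} {C : ℝ}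
    (hC : 0 ≤ C) (hv : h • v = v) (hW : ∀ w ∈ W, ∀ w' ∈ W, gp v w (h • w') ≤ C)
    (hA : ∀ a ∈ A, a ≠ v → ∃ w ∈ W, dist a w + C + 2 * δ < dist v a) :
    ∀ y ∈ W ∪ A, ∀ y' ∈ W ∪ A, gp v y (h • y') ≤ C + 2 * δ := by
  have hδ := hX.nonneg v
  have hleft : ∀ y ∈ W ∪ A, ∀ w' ∈ W, gp v y (h • w') ≤ C + δ := by
    rintro y (hy | hy) w' hw'
    · linarith [hW y hy w' hw']
    by_cases hyv : y = v
    · rw [hyv, gp_left_self]; linarith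
    obtain ⟨w, hw, hfar⟩ := hA y hy hyv
    exact hX.gp_le_of_far (hW w hw w' hw') (by linarith)
  rintro y hy y' (hy' | hy')
  · linarith [hleft y hy y' hy']
  by_cases hy'v : y' = v
  · rw [hy'v, hv, gp_right_self]; linarith
  obtain ⟨w', hw', hfar⟩ := hA y' hy' hy'v
  have hdist : dist v (h • y') = dist v y' := by rw [← dist_smul h v y', hv]
  have := hX.gp_le_of_far (b := h • y') ((gp_comm _ _ _).trans_le (hleft y hy w' hw'))
    (by rw [dist_smul, hdist]; linarith)
  linarith [gp_comm v y (h • y')]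

lemma IsHyp.gp_smul_hull_le (hX : IsHyp X δ) {Y : Set X} {v : X} {h : G} {C : ℝ}
    (hY : ∀ y ∈ Y, ∀ y' ∈ Y, gp v y (h • y') ≤ C) :
    ∀ z ∈ hull δ Y, ∀ z' ∈ hull δ Y, gp v z (h • z') ≤ C + 5 * δ := by
  have hδ := hX.nonneg v
  intro z hz z' hz'
  obtain ⟨y₁, hy₁, y₂, hy₂, h₁₂⟩ := exists_gp_le_of_mem_hull hz
  obtain ⟨y₃, hy₃, y₄, hy₄, h₃₄⟩ := exists_gp_le_of_mem_hull hz'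
  have hy : ∀ y ∈ Y, gp v y (h • z') ≤ C + 5 * δ / 2 := by
    intro y hy
    have h₃ : gp v (h • y₃) y ≤ C := (gp_comm _ _ _).trans_le (hY y hy y₃ hy₃)
    have h₄ : gp v (h • y₄) y ≤ C := (gp_comm _ _ _).trans_le (hY y hy y₄ hy₄)
    have := hX.gp_le_max_add (by linarith) ((gp_smul h z' y₃ y₄).trans_le h₃₄) v y
    linarith [max_le h₃ h₄, gp_comm v y (h • z')]
  have := hX.gp_le_max_add (by linarith) h₁₂ v (h • z')
  linarith [max_le (hy y₁ hy₁) (hy y₂ hy₂)]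

variable {R : Set (Subgroup G × X)} {W A : Set X}

lemma IsRotFam.gp_apex_hull_le (hR : IsRotFam σ R) (hX : IsHyp X δ) (hσ : 300 * δ < σ)
    (hWne : W.Nonempty) (hA : ∀ a ∈ A, a ∈ apices R ∧ infDist a W ≤ 3 * σ / 10)
    (hW : ∀ p ∈ R, p.2 ∈ A → ∀ h ∈ p.1, h ≠ 1 → ∀ x ∈ W, ∀ x' ∈ W,
      gp p.2 x (h • x') ≤ 100 * δ)
    {p : Subgroup G × X} (hp : p ∈ R) (hpA : p.2 ∈ A) {h : G} (hh : h ∈ p.1) (h1 : h ≠ 1) :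
    ∀ z ∈ hull δ (W ∪ A), ∀ z' ∈ hull δ (W ∪ A), gp p.2 z (h • z') ≤ 107 * δ := by
  have hδ := hX.nonneg p.2
  have hfar : ∀ a ∈ A, a ≠ p.2 → ∃ w ∈ W, dist a w + 100 * δ + 2 * δ < dist p.2 a := by
    intro a ha hne
    obtain ⟨⟨q, hq, rfl⟩, hd⟩ := hA a ha
    obtain ⟨w, hw, hqw⟩ := (infDist_lt_iff hWne).mp
      (hd.trans_lt (show 3 * σ / 10 < σ - 102 * δ by linarith))
    exact ⟨w, hw, by linarith [hR.2.2.1 p hp q hq (by rintro rfl; exact hne rfl)]⟩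
  have := hX.gp_smul_hull_le (hX.gp_smul_le_of_far (by positivity)
    (hR.smul_apex (by linarith) hp hh) (hW p hp hpA h hh h1) hfar)
  intro z hz z' hz'
  linarith [this z hz z' hz']

lemma IsRotFam.infDist_orbSet_le (hR : IsRotFam σ R) (hX : IsHyp X δ) (hδ : 0 < δ)
    (hQG : QGSpace X) (hσ : 300 * δ < σ) (hWne : W.Nonempty)
    (hA : ∀ a ∈ A, a ∈ apices R ∧ infDist a W ≤ 3 * σ / 10)
    (hW : ∀ p ∈ R, p.2 ∈ A → ∀ h ∈ p.1, h ≠ 1 → ∀ x ∈ W, ∀ x' ∈ W,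
      gp p.2 x (h • x') ≤ 100 * δ)
    {g : G} (hg : g ∈ rotSub R A) {z z' : X} (hz : z ∈ hull δ (W ∪ A))
    (hz' : z' ∈ hull δ (W ∪ A)) (x : X) :
    infDist x (orbSet (rotSub R A) (hull δ (W ∪ A))) ≤ gp x z (g • z') + 119 * δ := by
  obtain ⟨w, ⟨hw, hchain⟩, rfl⟩ :=
    exists_isReducedWord_of_mem_biSup (H := Prod.fst) (s := {q ∈ R | q.2 ∈ A}) hg
  have hAS : A ⊆ hull δ (W ∪ A) := Set.subset_union_right.trans (subset_hull hδ.le)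
  obtain ⟨l, hl, s, hs, s', hs', hgp⟩ :=
    hX.exists_prefix_gp_le (ε := 107 * δ) (L := σ) (w := w.map fun e => (e.1.2, e.2))
      (by linarith) (by positivity)
      (List.forall_mem_map.mpr fun e he => hR.smul_apex (by linarith) (hw e he).1.1 (hw e he).2.1)
      (List.forall_mem_map.mpr fun e he => hAS (hw e he).1.2)
      (List.forall_mem_map.mpr fun e he => hR.gp_apex_hull_le hX hσ hWne hA hW (hw e he).1.1
        (hw e he).1.2 (hw e he).2.1 (hw e he).2.2)
      ((List.isChain_map _).mpr <| hchain.imp_of_mem_imp fun e f he hf hef =>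
        hR.2.2.1 e.1 (hw e he).1.1 f.1 (hw f hf).1.1 hef)
      hz hz' x
  have hlK : l.prod ∈ rotSub R A := by
    refine Subgroup.list_prod_mem _ fun y hy => ?_
    obtain ⟨e, he, rfl⟩ : ∃ e ∈ w, e.2 = y := by simpa using hl.subset hy
    exact le_biSup Prod.fst (hw e he).1 (hw e he).2.1
  rw [show (w.map fun e => (e.1.2, e.2)).map Prod.snd = w.map Prod.snd by simp] at hgp
  linarith [(hX.qconvex_hull hδ hQG (W ∪ A)).infDist_orbSet_le hlK hs hs' x]

end Windmill

/-- `K_A · S` is `224δ`-quasi-convex and `W'` is `2δ`-quasi-convex. -/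
theorem windmill_W'_quasi_convex (δ : ℝ) (hδ : 0 < δ) :
    ∃ σ₀ : ℝ, 0 < σ₀ ∧
      ∀ (X : Type u) [MetricSpace X] (G : Type v) [Group G] [MulAction G X],
        (∀ g : G, Isometry fun x : X => g • x) →
        IsHyp X δ → QGSpace X →
        ∀ σ : ℝ, σ₀ ≤ σ → ∀ R : Set (Subgroup G × X), IsRotFam σ R →
          ∀ (W : Set X) (N : Subgroup G) (V : Set X),
            W.Nonempty → IsExtWindmill δ R W N V →
            ∀ A : Set X,
              A = { v | v ∈ apices R ∧ v ∉ V ∧ infDist v W ≤ 3 * σ / 10 } →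
              A.Nonempty →
              ∀ S : Set X, S = hull δ (W ∪ A) →
                ∀ W' : Set X, W' = nbhd (σ / 10) (orbSet (rotSub R A) S) →
                  QConvex (224 * δ) (orbSet (rotSub R A) S) ∧ QConvex (2 * δ) W' := by
  refine ⟨3000 * δ, by positivity, ?_⟩
  intro X _ G _ _ hiso hX hQG σ hσ R hR W N V hWne hWm A hA _ S hS W' hW'
  have : IsIsometricSMul G X := ⟨hiso⟩
  subst hS hW'
  have hAR : ∀ a ∈ A, a ∈ apices R ∧ infDist a W ≤ 3 * σ / 10 := fun a ha => by
    rw [hA] at ha; exact ⟨ha.1, ha.2.2⟩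
  have hW3 : ∀ p ∈ R, p.2 ∈ A → ∀ h ∈ p.1, h ≠ 1 → ∀ x ∈ W, ∀ x' ∈ W,
      gp p.2 x (h • x') ≤ 100 * δ := fun p hp hpA => by
    rw [hA] at hpA; exact hWm.2.2.2.2.1 p hp hpA.2.1
  have hT : QConvex (224 * δ) (orbSet (rotSub R A) (hull δ (W ∪ A))) :=
    qconvex_orbSet fun g hg z hz z' hz' x => by
      linarith [hR.infDist_orbSet_le hX hδ hQG (by linarith) hWne hAR hW3 hg hz hz' x]
  exact ⟨hT, hX.qconvex_nbhd hQG hT (by linarith)⟩
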